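/- arXiv:1610.09834 — 2 statements merged into one kernel-verified Lean document; each statement's English description precedes it below -/
import Mathlib

section
/- There exists a nonempty finite sequence of members of the family W whose product in F equals the identity element of F if and only if there exists a subset U ⊆ {1,…,k} with ∑_{i∈U} s_i = x (i.e., the subset sum instance (s₁,…,s_k; x) has a solution). -/
/-!
Send `F` to the free product of `2k + 4` copies of `ℤ`, one for each generator, where every element
has a unique reduced word of syllables `g_j^n`, `a^n`, `b^n`. The members of `W` are the edges
`g_p h g_{p+1}⁻¹` of a directed cycle on the vertices `0, …, 2k + 1` (indices mod `2k + 2`), with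
label `h` a power of `a` on the first half `0, …, k` and a power of `b` on the second.

If no subset of the `s_i` sums to `x`, the reduced word of every nonempty product of members of `W`
is `g_p` followed by one of: a single `g_q⁻¹` with `p < q`; `g_q⁻¹ g_{p'} …` with `q ∉ {p, p'}`;
or a syllable `a^n` (`b^n` on the second half) with `n = ∑_{i ∈ U} s_i` or `n = ∑_{i ∈ U} s_i - x`
for a set `U` of indices not smaller than the position of `p` in its half. Multiplying on the left
by an edge into `p` cancels `g_p`; a label `a^{s_i}` or `b^{s_i}` may then merge into that syllable,
adding an index below all of `U`, while `c` and `d` change half and start a fresh syllable. So `U`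
never repeats an index, and `n ≠ 0` since `s_i > 0` and no subset sum is `x`: the shape survives,
and the product is not `1`.

Conversely, if `∑_{i ∈ U} s_i = x`, one lap around the cycle, through `u_i, u'_i` for `i ∈ U` and
`v_i, v'_i` otherwise, telescopes to `g₀ a^x a^{-x} b^x b^{-x} g₀⁻¹ = 1`.
-/

/-- The free group on the `2k+4` generators `g₀, …, g_{2k+1}, a, b`:
`g j = FreeGroup.of (Sum.inl j)`, `a = FreeGroup.of (Sum.inr false)`,
`b = FreeGroup.of (Sum.inr true)`. -/
abbrev Fgrp (k : ℕ) := FreeGroup (Fin (2 * k + 2) ⊕ Bool)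

/-- The generator `g_j`. -/
def gGen {k : ℕ} (j : Fin (2 * k + 2)) : Fgrp k := FreeGroup.of (Sum.inl j)

/-- The generator `a`. -/
def aGen {k : ℕ} : Fgrp k := FreeGroup.of (Sum.inr false)

/-- The generator `b`. -/
def bGen {k : ℕ} : Fgrp k := FreeGroup.of (Sum.inr true)

/-- Index type for the family `W` of `4k+2` elements. -/
abbrev Widx (k : ℕ) := Fin k ⊕ Fin k ⊕ Fin k ⊕ Fin k ⊕ Bool

/-- The family `W`.  The index `i : Fin k` corresponds to the `1`-based index `i+1`,
and `s : Fin k → ℕ` lists `s₁, …, s_k`: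
* `u_{i+1} = g_i · a^{s_{i+1}} · g_{i+1}⁻¹`,
* `v_{i+1} = g_i · g_{i+1}⁻¹`,
* `u'_{i+1} = g_{k+i+1} · b^{s_{i+1}} · g_{k+i+2}⁻¹`,
* `v'_{i+1} = g_{k+i+1} · g_{k+i+2}⁻¹`,
* `c = g_k · a^{-x} · g_{k+1}⁻¹`,
* `d = g_{2k+1} · b^{-x} · g₀⁻¹`. -/
def Wfam {k : ℕ} (s : Fin k → ℕ) (x : ℕ) : Widx k → Fgrp k
  | Sum.inl i =>
      gGen ⟨(i : ℕ), by have := i.isLt; omega⟩ * aGen ^ (s i) *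
        (gGen ⟨(i : ℕ) + 1, by have := i.isLt; omega⟩)⁻¹
  | Sum.inr (Sum.inl i) =>
      gGen ⟨(i : ℕ), by have := i.isLt; omega⟩ *
        (gGen ⟨(i : ℕ) + 1, by have := i.isLt; omega⟩)⁻¹
  | Sum.inr (Sum.inr (Sum.inl i)) =>
      gGen ⟨k + (i : ℕ) + 1, by have := i.isLt; omega⟩ * bGen ^ (s i) *
        (gGen ⟨k + (i : ℕ) + 2, by have := i.isLt; omega⟩)⁻¹
  | Sum.inr (Sum.inr (Sum.inr (Sum.inl i))) =>
      gGen ⟨k + (i : ℕ) + 1, by have := i.isLt; omega⟩ *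
        (gGen ⟨k + (i : ℕ) + 2, by have := i.isLt; omega⟩)⁻¹
  | Sum.inr (Sum.inr (Sum.inr (Sum.inr false))) =>
      gGen ⟨k, by omega⟩ * (aGen ^ x)⁻¹ * (gGen ⟨k + 1, by omega⟩)⁻¹
  | Sum.inr (Sum.inr (Sum.inr (Sum.inr true))) =>
      gGen ⟨2 * k + 1, by omega⟩ * (bGen ^ x)⁻¹ * (gGen ⟨0, by omega⟩)⁻¹

open Monoid Multiplicative

namespace SubsetSumFreeGroup

section Syllables

variable {ι : Type*}

abbrev Syllable (ι : Type*) (_ : ι) : Type := Multiplicative ℤ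

def syl (i : ι) (n : ℤ) : CoprodI (Syllable ι) := CoprodI.of (i := i) (ofAdd n)

theorem syl_mul_syl (i : ι) (m n : ℤ) : syl i m * syl i n = syl i (m + n) := by
  simp only [syl, ← map_mul, ← ofAdd_add]

theorem syl_neg (i : ι) (n : ℤ) : syl i (-n) = (syl i n)⁻¹ :=
  eq_inv_of_mul_eq_one_left <| by rw [syl_mul_syl, neg_add_cancel, syl, ofAdd_zero, map_one]

def toSyllables : FreeGroup ι →* CoprodI (Syllable ι) :=
  FreeGroup.lift fun i => syl i 1

theorem toSyllables_of_pow (i : ι) (n : ℕ) : toSyllables (FreeGroup.of i ^ n) = syl i n := by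
  rw [map_pow, toSyllables, FreeGroup.lift_apply_of, syl, syl, ← map_pow, ← ofAdd_nsmul,
    nsmul_one]

end Syllables

section IsReduced

variable {ι : Type*} {M : ι → Type*}

def IsReduced [∀ i, One (M i)] (L : List (Σ i, M i)) : Prop :=
  (∀ l ∈ L, l.2 ≠ 1) ∧ L.IsChain fun l l' => l.1 ≠ l'.1

theorem isReduced_nil [∀ i, One (M i)] : IsReduced ([] : List (Σ i, M i)) :=
  ⟨by simp, .nil⟩

theorem isReduced_cons_iff [∀ i, One (M i)] {a : Σ i, M i} {L : List (Σ i, M i)} :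
    IsReduced (a :: L) ↔ a.2 ≠ 1 ∧ (∀ b ∈ L.head?, a.1 ≠ b.1) ∧ IsReduced L := by
  simp only [IsReduced, List.mem_cons, forall_eq_or_imp, List.isChain_cons]
  tauto

theorem IsReduced.prod_ne_one [DecidableEq ι] [∀ i, Monoid (M i)] [∀ i, DecidableEq (M i)]
    {L : List (Σ i, M i)} (hL : IsReduced L) (hne : L ≠ []) :
    (L.map fun l => CoprodI.of l.2).prod ≠ 1 := by
  intro h
  let w : CoprodI.Word M := ⟨L, hL.1, hL.2⟩
  have : w = .empty := CoprodI.Word.equiv.symm.injective h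
  exact hne (congrArg CoprodI.Word.toList this)

end IsReduced

theorem prod_ofFn_telescope {G : Type*} [Group G] {n : ℕ} (g : Fin (n + 1) → G)
    (h : G) (e : Fin n → ℕ) :
    (List.ofFn fun i => g i.castSucc * h ^ e i * (g i.succ)⁻¹).prod =
      g 0 * h ^ (∑ i, e i) * (g (Fin.last n))⁻¹ := by
  induction n with
  | zero => simp
  | succ n ih =>
    rw [List.ofFn_succ', List.prod_concat, Fin.sum_univ_castSucc, pow_add]
    simp only [Fin.succ_castSucc]
    rw [ih (fun i => g i.castSucc) (fun i => e i.castSucc)]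
    simp only [Fin.castSucc_zero, Fin.succ_last]
    group

section Forward

variable {k : ℕ}

abbrev Vertex (k : ℕ) := Fin (2 * k + 2)

abbrev Letter (k : ℕ) := Σ i, Syllable (Vertex k ⊕ Bool) i

def gLetter (q : Vertex k) (n : ℤ) : Letter k := ⟨.inl q, ofAdd n⟩

def abLetter (t : Bool) (n : ℤ) : Letter k := ⟨.inr t, ofAdd n⟩

def lettersProd (L : List (Letter k)) : CoprodI (Syllable (Vertex k ⊕ Bool)) :=
  (L.map fun l => CoprodI.of l.2).prod

@[simp]
theorem lettersProd_nil : lettersProd ([] : List (Letter k)) = 1 := rfl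

@[simp]
theorem lettersProd_gLetter_cons (q : Vertex k) (n : ℤ) (L : List (Letter k)) :
    lettersProd (gLetter q n :: L) = syl (.inl q) n * lettersProd L := rfl

@[simp]
theorem lettersProd_abLetter_cons (t : Bool) (n : ℤ) (L : List (Letter k)) :
    lettersProd (abLetter t n :: L) = syl (.inr t) n * lettersProd L := rfl

@[simp]
theorem gLetter_fst (q : Vertex k) (n : ℤ) : (gLetter q n).1 = .inl q := rfl

@[simp]
theorem abLetter_fst (t : Bool) (n : ℤ) : (abLetter (k := k) t n).1 = .inr t := rfl

@[simp]
theorem gLetter_snd_eq_one_iff (q : Vertex k) (n : ℤ) : (gLetter q n).2 = 1 ↔ n = 0 := ofAdd_eq_one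

@[simp]
theorem abLetter_snd_eq_one_iff (t : Bool) (n : ℤ) : (abLetter (k := k) t n).2 = 1 ↔ n = 0 :=
  ofAdd_eq_one

/-- Vertices `0, …, k` form the half labelled by powers of `a` (`false`), vertices
`k + 1, …, 2k + 1` the half labelled by powers of `b` (`true`); `p % (k + 1)` is the position of
`p` in its half. -/
def half (p : Vertex k) : Bool := decide (k < (p : ℕ))

theorem half_mk_of_le {v : ℕ} (hv : v < 2 * k + 2) (h : v ≤ k) :
    half (⟨v, hv⟩ : Vertex k) = false :=
  decide_eq_false (Nat.not_lt.2 h)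

theorem half_mk_of_lt {v : ℕ} (hv : v < 2 * k + 2) (h : k < v) :
    half (⟨v, hv⟩ : Vertex k) = true :=
  decide_eq_true h

theorem val_mk_mod {v j : ℕ} (hv : v < 2 * k + 2) (hj : j ≤ k) (h : v = j ∨ v = j + (k + 1)) :
    ((⟨v, hv⟩ : Vertex k) : ℕ) % (k + 1) = j := by
  dsimp only
  rcases h with rfl | rfl
  · exact Nat.mod_eq_of_lt (by omega)
  · rw [Nat.add_mod_right, Nat.mod_eq_of_lt (by omega)]

variable (s : Fin k → ℕ) (x : ℕ)

def SuffixSum (p : Vertex k) (n : ℤ) : Prop :=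
  ∃ U : Finset (Fin k), (∀ i ∈ U, (p : ℕ) % (k + 1) ≤ i) ∧
    (U.Nonempty ∧ n = ∑ i ∈ U, (s i : ℤ) ∨ n = ∑ i ∈ U, (s i : ℤ) - x)

variable {s x}

theorem SuffixSum.ne_zero (hs : ∀ i, 0 < s i) (H : ∀ U : Finset (Fin k), ∑ i ∈ U, s i ≠ x)
    {p : Vertex k} {n : ℤ} (h : SuffixSum s x p n) : n ≠ 0 := by
  obtain ⟨U, -, ⟨hU, rfl⟩ | rfl⟩ := h
  · exact (Finset.sum_pos (fun i _ => by exact_mod_cast hs i) hU).ne'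
  · rw [sub_ne_zero]
    exact_mod_cast H U

theorem suffixSum_single {p : Vertex k} {i : Fin k} (hp : (p : ℕ) % (k + 1) = i) :
    SuffixSum s x p (s i) :=
  ⟨{i}, by simp [hp], .inl ⟨Finset.singleton_nonempty i, by simp⟩⟩

theorem suffixSum_neg (p : Vertex k) : SuffixSum s x p (-x) :=
  ⟨∅, by simp, .inr (by simp)⟩

theorem SuffixSum.anti {p q : Vertex k} (hpq : (p : ℕ) % (k + 1) ≤ (q : ℕ) % (k + 1)) {n : ℤ}
    (h : SuffixSum s x q n) : SuffixSum s x p n :=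
  let ⟨U, hU, hn⟩ := h
  ⟨U, fun i hi => hpq.trans (hU i hi), hn⟩

theorem SuffixSum.extend {p q : Vertex k} {i : Fin k} (hp : (p : ℕ) % (k + 1) = i)
    (hq : (q : ℕ) % (k + 1) = i + 1) {n : ℤ} (h : SuffixSum s x q n) :
    SuffixSum s x p (s i + n) := by
  obtain ⟨U, hU, hn⟩ := h
  have hi : i ∉ U := fun hi => by have := hU i hi; omega
  refine ⟨insert i U, ?_, ?_⟩
  · simp only [Finset.mem_insert, forall_eq_or_imp, hp, le_refl, true_and]
    exact fun j hj => by have := hU j hj; omega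
  · rw [Finset.sum_insert hi]
    rcases hn with ⟨-, rfl⟩ | rfl
    · exact .inl ⟨Finset.insert_nonempty i U, rfl⟩
    · exact .inr (by ring)

variable (s x) in
/-- The shape of the normal form `g_p :: t` of a nonempty product of members of `W`. -/
inductive Tail : Vertex k → List (Letter k) → Prop
  | single {p q : Vertex k} (hpq : (p : ℕ) < q) : Tail p [gLetter q (-1)]
  | junction {p q p' : Vertex k} {t : List (Letter k)} (hqp : q ≠ p) (hqp' : q ≠ p')
      (h : Tail p' t) : Tail p (gLetter q (-1) :: gLetter p' 1 :: t)
  | syllable {p : Vertex k} {n : ℤ} {r : List (Letter k)} (hn : SuffixSum s x p n)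
      (hr : IsReduced (abLetter (half p) n :: r)) : Tail p (abLetter (half p) n :: r)

theorem Tail.isReduced {p : Vertex k} {t : List (Letter k)} (h : Tail s x p t) :
    IsReduced (gLetter p 1 :: t) := by
  induction h with
  | single hpq =>
    simp [isReduced_cons_iff, isReduced_nil, Fin.ne_of_lt hpq]
  | junction hqp hqp' _ ih =>
    simp_all [isReduced_cons_iff, Ne.symm hqp]
  | syllable _ hr => simp [isReduced_cons_iff, hr]

variable (s x) in
def Reachable (R : List (Letter k)) : Prop :=
  R = [] ∨ ∃ p t, Tail s x p t ∧ R = gLetter p 1 :: t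

theorem Reachable.step_v {R : List (Letter k)} (hR : Reachable s x R) {pe qe : Vertex k}
    (hlt : (pe : ℕ) < qe) (hhalf : half qe = half pe)
    (hanti : ∀ n, SuffixSum s x qe n → SuffixSum s x pe n) :
    ∃ p t, Tail s x p t ∧
      lettersProd (gLetter p 1 :: t) = syl (.inl pe) 1 * (syl (.inl qe) 1)⁻¹ * lettersProd R := by
  rcases hR with rfl | ⟨p, t, ht, rfl⟩
  · exact ⟨pe, _, .single hlt, by simp [syl_neg]⟩
  by_cases hqp : qe = p
  · subst hqp
    cases ht with
    | single hpq => exact ⟨pe, _, .single (hlt.trans hpq), by simp [syl_neg, mul_assoc]⟩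
    | @junction _ q p' t hqp hqp' h =>
      by_cases hq : q = pe
      · subst hq
        exact ⟨p', t, h, by simp [syl_neg, mul_assoc]⟩
      · exact ⟨pe, _, .junction hq hqp' h, by simp [syl_neg, mul_assoc]⟩
    | syllable hn hr =>
      rw [hhalf] at hr ⊢
      exact ⟨pe, _, .syllable (hanti _ hn) hr, by simp [mul_assoc]⟩
  · exact ⟨pe, _, .junction (Fin.ne_of_gt hlt) hqp ht, by simp [syl_neg, mul_assoc]⟩

theorem Reachable.step_u (hs : ∀ i, 0 < s i) (H : ∀ U : Finset (Fin k), ∑ i ∈ U, s i ≠ x)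
    {R : List (Letter k)} (hR : Reachable s x R) {pe qe : Vertex k} {m : ℤ}
    (hm : SuffixSum s x pe m)
    (hmerge : half qe = half pe → ∀ n, SuffixSum s x qe n → SuffixSum s x pe (m + n)) :
    ∃ p t, Tail s x p t ∧ lettersProd (gLetter p 1 :: t) =
      syl (.inl pe) 1 * syl (.inr (half pe)) m * (syl (.inl qe) 1)⁻¹ * lettersProd R := by
  have fresh (L : List (Letter k)) (hL : IsReduced L) (hhead : ∀ b ∈ L.head?, b.1 ≠ .inr (half pe))
      (hval : lettersProd L = (syl (.inl qe) 1)⁻¹ * lettersProd R) :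
      ∃ p t, Tail s x p t ∧ lettersProd (gLetter p 1 :: t) =
        syl (.inl pe) 1 * syl (.inr (half pe)) m * (syl (.inl qe) 1)⁻¹ * lettersProd R := by
    refine ⟨pe, abLetter (half pe) m :: L, .syllable hm ?_, by simp [hval, mul_assoc]⟩
    exact isReduced_cons_iff.2 ⟨by simpa using hm.ne_zero hs H, fun b hb => (hhead b hb).symm, hL⟩
  rcases hR with rfl | ⟨p, t, ht, rfl⟩
  · exact fresh [gLetter qe (-1)] (by simp [isReduced_cons_iff, isReduced_nil]) (by simp)
      (by simp [syl_neg])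
  by_cases hqp : qe = p
  · subst hqp
    have hred := (isReduced_cons_iff.1 ht.isReduced).2.2
    cases ht with
    | single => exact fresh _ hred (by simp) (by simp)
    | junction => exact fresh _ hred (by simp) (by simp)
    | @syllable _ n r hn hr =>
      by_cases hh : half qe = half pe
      · have hmn := hmerge hh n hn
        rw [hh] at hr ⊢
        obtain ⟨-, hhead, hr⟩ := isReduced_cons_iff.1 hr
        refine ⟨pe, abLetter (half pe) (m + n) :: r, .syllable hmn ?_, ?_⟩
        · exact isReduced_cons_iff.2 ⟨by simpa using hmn.ne_zero hs H, by simpa using hhead, hr⟩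
        · simp [← syl_mul_syl, mul_assoc]
      · exact fresh _ hred (by simp [hh]) (by simp)
  · exact fresh (gLetter qe (-1) :: gLetter p 1 :: t)
      (isReduced_cons_iff.2 ⟨by simp, by simpa using hqp, ht.isReduced⟩)
      (by simp) (by simp [syl_neg])

theorem toSyllables_gGen (j : Vertex k) : toSyllables (gGen j : Fgrp k) = syl (.inl j) 1 :=
  FreeGroup.lift_apply_of

theorem toSyllables_aGen_pow (n : ℕ) : toSyllables (aGen ^ n : Fgrp k) = syl (.inr false) n :=
  toSyllables_of_pow _ n

theorem toSyllables_bGen_pow (n : ℕ) : toSyllables (bGen ^ n : Fgrp k) = syl (.inr true) n :=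
  toSyllables_of_pow _ n

theorem Reachable.step (hs : ∀ i, 0 < s i) (H : ∀ U : Finset (Fin k), ∑ i ∈ U, s i ≠ x)
    {R : List (Letter k)} (hR : Reachable s x R) (e : Widx k) :
    ∃ p t, Tail s x p t ∧
      lettersProd (gLetter p 1 :: t) = toSyllables (Wfam s x e) * lettersProd R := by
  rcases e with i | i | i | i | _ | _ <;>
    simp only [Wfam, map_mul, map_inv, toSyllables_gGen, toSyllables_aGen_pow, toSyllables_bGen_pow]
  · obtain ⟨p, t, ht, h⟩ := hR.step_u (pe := ⟨i, by omega⟩) (qe := ⟨i + 1, by omega⟩) hs H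
      (suffixSum_single (i := i) (val_mk_mod _ (by omega) (by omega)))
      (fun _ _ hn => hn.extend (val_mk_mod _ (by omega) (by omega))
        (val_mk_mod _ (by omega) (by omega)))
    rw [half_mk_of_le _ (by omega)] at h
    exact ⟨p, t, ht, h⟩
  · exact hR.step_v (pe := ⟨i, by omega⟩) (qe := ⟨i + 1, by omega⟩) (by simp)
      (by rw [half_mk_of_le _ (by omega), half_mk_of_le _ (by omega)])
      (fun _ hn => hn.anti (by
        rw [val_mk_mod _ (j := i) (by omega) (by omega),
          val_mk_mod _ (j := i + 1) (by omega) (by omega)]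
        omega))
  · obtain ⟨p, t, ht, h⟩ :=
      hR.step_u (pe := ⟨k + i + 1, by omega⟩) (qe := ⟨k + i + 2, by omega⟩) hs H
        (suffixSum_single (i := i) (val_mk_mod _ (by omega) (by omega)))
        (fun _ _ hn => hn.extend (val_mk_mod _ (by omega) (by omega))
          (val_mk_mod _ (by omega) (by omega)))
    rw [half_mk_of_lt _ (by omega)] at h
    exact ⟨p, t, ht, h⟩
  · exact hR.step_v (pe := ⟨k + i + 1, by omega⟩) (qe := ⟨k + i + 2, by omega⟩) (by simp)
      (by rw [half_mk_of_lt _ (by omega), half_mk_of_lt _ (by omega)])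
      (fun _ hn => hn.anti (by
        rw [val_mk_mod _ (j := i) (by omega) (by omega),
          val_mk_mod _ (j := i + 1) (by omega) (by omega)]
        omega))
  · obtain ⟨p, t, ht, h⟩ := hR.step_u (pe := ⟨k, by omega⟩) (qe := ⟨k + 1, by omega⟩) hs H
      (suffixSum_neg _) (fun hh => by simp [half] at hh)
    rw [half_mk_of_le _ le_rfl, syl_neg] at h
    exact ⟨p, t, ht, h⟩
  · obtain ⟨p, t, ht, h⟩ := hR.step_u (pe := ⟨2 * k + 1, by omega⟩) (qe := ⟨0, by omega⟩) hs H
      (suffixSum_neg _) (fun hh => by simp [half] at hh; omega)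
    rw [half_mk_of_lt _ (by omega), syl_neg] at h
    exact ⟨p, t, ht, h⟩

theorem exists_tail_of_ne_nil (hs : ∀ i, 0 < s i) (H : ∀ U : Finset (Fin k), ∑ i ∈ U, s i ≠ x)
    (l : List (Widx k)) (hl : l ≠ []) :
    ∃ p t, Tail s x p t ∧ lettersProd (gLetter p 1 :: t) = toSyllables (l.map (Wfam s x)).prod := by
  induction l with
  | nil => contradiction
  | cons e l ih =>
    obtain ⟨R, hR, hRl⟩ :
        ∃ R, Reachable s x R ∧ lettersProd R = toSyllables (l.map (Wfam s x)).prod := by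
      rcases eq_or_ne l [] with rfl | hl
      · exact ⟨[], .inl rfl, by simp⟩
      · obtain ⟨p, t, ht, h⟩ := ih hl
        exact ⟨_, .inr ⟨p, t, ht, rfl⟩, h⟩
    obtain ⟨p, t, ht, h⟩ := hR.step hs H e
    exact ⟨p, t, ht, by rw [h, hRl, List.map_cons, List.prod_cons, map_mul]⟩

theorem prod_ne_one_of_forall_sum_ne (hs : ∀ i, 0 < s i)
    (H : ∀ U : Finset (Fin k), ∑ i ∈ U, s i ≠ x) (l : List (Widx k)) (hl : l ≠ []) :
    (l.map (Wfam s x)).prod ≠ 1 := by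
  obtain ⟨p, t, ht, h⟩ := exists_tail_of_ne_nil hs H l hl
  intro h1
  rw [h1, map_one] at h
  exact ht.isReduced.prod_ne_one (List.cons_ne_nil _ _) h

end Forward

theorem exists_prod_eq_one_of_sum_eq {k : ℕ} {s : Fin k → ℕ} {x : ℕ} (U : Finset (Fin k))
    (hU : ∑ i ∈ U, s i = x) : ∃ l : List (Widx k), l ≠ [] ∧ (l.map (Wfam s x)).prod = 1 := by
  let e (i : Fin k) : ℕ := if i ∈ U then s i else 0
  have he : ∑ i, e i = x := by rw [← hU, Finset.sum_ite_mem, Finset.univ_inter]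
  let lapA : List (Widx k) := List.ofFn fun i => if i ∈ U then .inl i else .inr (.inl i)
  let lapB : List (Widx k) := List.ofFn fun i =>
    if i ∈ U then .inr (.inr (.inl i)) else .inr (.inr (.inr (.inl i)))
  have hA : (lapA.map (Wfam s x)).prod =
      gGen ⟨0, by omega⟩ * aGen ^ x * (gGen ⟨k, by omega⟩)⁻¹ := by
    rw [List.map_ofFn]
    conv_rhs => rw [← he]
    refine (congrArg List.prod (congrArg List.ofFn (funext fun i => ?_))).trans
      (prod_ofFn_telescope (fun j : Fin (k + 1) => gGen ⟨j, by omega⟩) aGen e)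
    by_cases hi : i ∈ U <;> simp [Wfam, hi, e]
  have hB : (lapB.map (Wfam s x)).prod =
      gGen ⟨k + 1, by omega⟩ * bGen ^ x * (gGen ⟨2 * k + 1, by omega⟩)⁻¹ := by
    rw [List.map_ofFn, show (⟨2 * k + 1, _⟩ : Vertex k) = ⟨k + k + 1, by omega⟩ from
      Fin.ext (by dsimp only; omega)]
    conv_rhs => rw [← he]
    refine (congrArg List.prod (congrArg List.ofFn (funext fun i => ?_))).trans
      (prod_ofFn_telescope (fun j : Fin (k + 1) => gGen ⟨k + j + 1, by omega⟩) bGen e)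
    by_cases hi : i ∈ U <;> simp [Wfam, hi, e] <;> rfl
  refine ⟨lapA ++ .inr (.inr (.inr (.inr false))) :: lapB ++ [.inr (.inr (.inr (.inr true)))],
    by simp, ?_⟩
  simp only [List.map_append, List.map_cons, List.prod_append, List.prod_cons, List.map_nil,
    List.prod_nil, hA, hB, Wfam]
  group

end SubsetSumFreeGroup

theorem identity_in_semigroup_iff_subset_sum_general (k : ℕ)
    (s : Fin k → ℕ) (hs : ∀ i, 0 < s i) (x : ℕ) :
    (∃ l : List (Widx k), l ≠ [] ∧ (l.map (Wfam s x)).prod = 1) ↔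
      (∃ U : Finset (Fin k), ∑ i ∈ U, s i = x) := by
  refine ⟨fun ⟨l, hl, h⟩ => ?_, fun ⟨U, hU⟩ => SubsetSumFreeGroup.exists_prod_eq_one_of_sum_eq U hU⟩
  by_contra! H
  exact SubsetSumFreeGroup.prod_ne_one_of_forall_sum_ne hs H l hl h

/-- Some nonempty product of members of the family `W` equals the identity of `F`
iff the subset sum instance `(s₁,…,s_k; x)` has a solution. -/
theorem identity_in_semigroup_iff_subset_sum (k : ℕ) (hk : 1 ≤ k)
    (s : Fin k → ℕ) (hs : ∀ i, 0 < s i) (x : ℕ) (hx : 0 < x) :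
    (∃ l : List (Widx k), l ≠ [] ∧ (l.map (Wfam s x)).prod = 1) ↔
      (∃ U : Finset (Fin k), ∑ i ∈ U, s i = x) :=
  identity_in_semigroup_iff_subset_sum_general k s hs x
end

section
/- There exists an element of the subsemigroup of F generated by the family W (i.e., an element equal to some product of a nonempty finite sequence of members of W) that has infinitely many distinct factorizations over W if and only if there exists a subset U ⊆ {1,…,k} with ∑_{i∈U} s_i = x. -/
/-!
Read `W` as the edges of a cycle through `g₀, …, g_{2k+1}`: each element of `W` is `g_p z^e g_q⁻¹`
with `z ∈ {a, b}`; the edges of the half `g₀ → ⋯ → g_k` carry `a`, those of the half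
`g_{k+1} → ⋯ → g_{2k+1}` carry `b`, and `c`, `d` cross between the halves carrying `a^{-x}`, `b^{-x}`.

If `∑_{i ∈ U} s_i = x`, going once around the cycle through `u_i`, `u'_i` for `i ∈ U` and through
`v_i`, `v'_i` otherwise multiplies out to `1`, so all powers of this cycle are factorizations of `1`.

Conversely, read a factorization from the right. Its product reduces to a word `g_p z^E T`, where
`E` is a sum of distinct `s_i`, minus `x` if the path from `g_p` has crossed to the other half.
Without a subset sum equal to `x`, `E = 0` forces the path to stay within one half, so `g_p` does
not cancel against `T`. Hence the weight `|T| + [E ≠ 0]` never decreases, and it increases at every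
step except when the path continues along a half, which happens at most `2k + 1` times in a row.
So a factorization of `m` has length at most `(2k + 2) · ‖m‖`, and `m` has finitely many of them.
-/

namespace FreeGroup

variable {α : Type*}

theorem isReduced_cons {a : α × Bool} {L : List (α × Bool)} :
    IsReduced (a :: L) ↔ (∀ b ∈ L.head?, a.1 = b.1 → a.2 = b.2) ∧ IsReduced L :=
  List.isChain_cons

theorem isReduced_append {L₁ L₂ : List (α × Bool)} :
    IsReduced (L₁ ++ L₂) ↔ IsReduced L₁ ∧ IsReduced L₂ ∧
      ∀ a ∈ L₁.getLast?, ∀ b ∈ L₂.head?, a.1 = b.1 → a.2 = b.2 :=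
  List.isChain_append

theorem IsReduced.norm_mk [DecidableEq α] {L : List (α × Bool)} (h : IsReduced L) :
    norm (mk L) = L.length := by
  rw [norm, toWord_mk, h.reduce_eq]

theorem mk_cons (a : α × Bool) (L : List (α × Bool)) : mk (a :: L) = mk [a] * mk L := by
  rw [mul_mk]
  rfl

theorem mk_singleton_false (a : α) : mk [(a, false)] = (of a)⁻¹ := by
  rw [of, inv_mk]
  rfl

def zpowWord (a : α) (n : ℤ) : List (α × Bool) := List.replicate n.natAbs (a, 0 ≤ n)

theorem mk_zpowWord (a : α) (n : ℤ) : mk (zpowWord a n) = of a ^ n := by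
  cases n with
  | ofNat m => simp [zpowWord, of]
  | negSucc m =>
    rw [zpow_negSucc, ← inv_pow, ← mk_singleton_false, pow_mk, List.flatten_replicate_singleton]
    simp [zpowWord]

theorem isReduced_zpowWord (a : α) (n : ℤ) : IsReduced (zpowWord a n) :=
  List.isChain_replicate_of_rel _ fun _ ↦ rfl

theorem fst_of_mem_zpowWord {a : α} {n : ℤ} {u : α × Bool} (h : u ∈ zpowWord a n) : u.1 = a := by
  rw [List.eq_of_mem_replicate h]

theorem zpowWord_eq_nil_iff {a : α} {n : ℤ} : zpowWord a n = [] ↔ n = 0 := by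
  simp [zpowWord]

theorem mem_head?_zpowWord_append {a : α} {n : ℤ} {L : List (α × Bool)} {u : α × Bool}
    (h : u ∈ (zpowWord a n ++ L).head?) : u.1 = a ∨ n = 0 ∧ u ∈ L.head? := by
  by_cases hn : n = 0
  · simp_all [zpowWord]
  · rw [List.head?_append_of_ne_nil _ (zpowWord_eq_nil_iff.not.2 hn)] at h
    exact .inl (fst_of_mem_zpowWord (List.mem_of_mem_head? h))

end FreeGroup

theorem List.prod_ofFn_mul_pow_mul_inv {G : Type*} [Group G] {n : ℕ} (g : Fin (n + 1) → G)
    (z : G) (e : Fin n → ℕ) :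
    (List.ofFn fun i ↦ g i.castSucc * z ^ e i * (g i.succ)⁻¹).prod =
      g 0 * z ^ (∑ i, e i) * (g (Fin.last n))⁻¹ := by
  induction n with
  | zero => simp
  | succ n ih =>
    have := ih (g ∘ Fin.castSucc) (e ∘ Fin.castSucc)
    simp only [Function.comp_apply] at this
    rw [List.ofFn_succ', List.concat_eq_append, List.prod_append]
    simp only [Fin.succ_castSucc, this]
    simp [Fin.sum_univ_castSucc, pow_add, mul_assoc]

theorem List.infinite_setOf_prod_map_eq_one {ι M : Type*} [Monoid M] {f : ι → M} {c : List ι}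
    (hc : c ≠ []) (h : (c.map f).prod = 1) :
    {l : List ι | l ≠ [] ∧ (l.map f).prod = 1}.Infinite := by
  have hlen : 0 < c.length := List.length_pos_iff.2 hc
  refine Set.infinite_of_injective_forall_mem (f := fun n : ℕ ↦ (List.replicate (n + 1) c).flatten)
    (fun m n hmn ↦ ?_) fun n ↦ ⟨by simp [hc], by simp [List.map_flatten, List.prod_flatten, h]⟩
  have := congrArg List.length hmn
  simp only [List.length_flatten, List.map_replicate, List.sum_replicate, smul_eq_mul] at this
  have := Nat.eq_of_mul_eq_mul_right hlen this
  omega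

open FreeGroup

namespace SubsetSumCycle

variable {k : ℕ}

abbrev Letter (k : ℕ) := (Fin (2 * k + 2) ⊕ Bool) × Bool

/-- Whether the edges leaving `g_p` carry `a` (`false`) or `b` (`true`). -/
def side (p : Fin (2 * k + 2)) : Bool := decide (k < p)

def src : Widx k → Fin (2 * k + 2)
  | .inl i | .inr (.inl i) => ⟨i, by omega⟩
  | .inr (.inr (.inl i)) | .inr (.inr (.inr (.inl i))) => ⟨k + i + 1, by omega⟩
  | .inr (.inr (.inr (.inr false))) => ⟨k, by omega⟩
  | .inr (.inr (.inr (.inr true))) => ⟨2 * k + 1, by omega⟩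

def tgt : Widx k → Fin (2 * k + 2)
  | .inl i | .inr (.inl i) => ⟨i + 1, by omega⟩
  | .inr (.inr (.inl i)) | .inr (.inr (.inr (.inl i))) => ⟨k + i + 2, by omega⟩
  | .inr (.inr (.inr (.inr false))) => ⟨k + 1, by omega⟩
  | .inr (.inr (.inr (.inr true))) => ⟨0, by omega⟩

def exponent (s : Fin k → ℕ) (x : ℕ) : Widx k → ℤ
  | .inl i | .inr (.inr (.inl i)) => s i
  | .inr (.inl _) | .inr (.inr (.inr (.inl _))) => 0
  | .inr (.inr (.inr (.inr _))) => -x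

/-- The position of the source of the `i`-th edge of the half `c`. -/
def edgePos (c : Bool) (i : Fin k) : ℕ := if c then k + i + 1 else i

theorem side_of_le {p : ℕ} (hp : p < 2 * k + 2) (h : p ≤ k) : side ⟨p, hp⟩ = false :=
  decide_eq_false (by simpa using h)

theorem side_of_lt {p : ℕ} (hp : p < 2 * k + 2) (h : k < p) : side ⟨p, hp⟩ = true :=
  decide_eq_true h

variable (s : Fin k → ℕ) (x : ℕ)

theorem Wfam_eq (w : Widx k) :
    Wfam s x w = gGen (src w) * of (.inr (side (src w))) ^ exponent s x w * (gGen (tgt w))⁻¹ := by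
  rcases w with i | i | i | i | _ | _ <;>
    simp (disch := omega) [Wfam, src, tgt, exponent, aGen, bGen, side_of_le, side_of_lt]

theorem forward_or_crossing (w : Widx k) :
    ((tgt w : ℕ) = src w + 1 ∧ side (tgt w) = side (src w) ∧
      ∃ U : Finset (Fin k), (∀ i ∈ U, edgePos (side (src w)) i = src w) ∧
        exponent s x w = ∑ i ∈ U, (s i : ℤ)) ∨
    (exponent s x w = -x ∧ side (tgt w) ≠ side (src w)) := by
  rcases w with i | i | i | i | _ | _
  · exact .inl ⟨rfl, by simp (disch := omega) [side_of_le, src, tgt], {i},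
      by simp (disch := omega) [side_of_le, edgePos, src], by simp [exponent]⟩
  · exact .inl ⟨rfl, by simp (disch := omega) [side_of_le, src, tgt], ∅, by simp,
      by simp [exponent]⟩
  · exact .inl ⟨rfl, by simp (disch := omega) [side_of_lt, src, tgt], {i},
      by simp (disch := omega) [side_of_lt, edgePos, src], by simp [exponent]⟩
  · exact .inl ⟨rfl, by simp (disch := omega) [side_of_lt, src, tgt], ∅, by simp,
      by simp [exponent]⟩
  · exact .inr ⟨rfl, by simp (disch := omega) [side_of_le, side_of_lt, src, tgt]⟩
  · exact .inr ⟨rfl, by simp [side, src, tgt]; omega⟩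

/-- Only edges from `g_p` on are allowed, so that prepending an edge keeps the indices distinct. -/
def IsSumFrom (p : Fin (2 * k + 2)) (E : ℤ) : Prop :=
  ∃ (U : Finset (Fin k)) (ε : Bool), (∀ i ∈ U, (p : ℕ) ≤ edgePos (side p) i) ∧
    E = ∑ i ∈ U, (s i : ℤ) - if ε then (x : ℤ) else 0

theorem isSumFrom_exponent (w : Widx k) : IsSumFrom s x (src w) (exponent s x w) := by
  rcases forward_or_crossing s x w with ⟨-, -, U, hU, he⟩ | ⟨he, -⟩
  · exact ⟨U, false, fun i hi ↦ (hU i hi).ge, by simp [he]⟩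
  · exact ⟨∅, true, by simp, by simp [he]⟩

def stateWord (p : Fin (2 * k + 2)) (E : ℤ) (T : List (Letter k)) : List (Letter k) :=
  (.inl p, true) :: (zpowWord (Sum.inr (side p)) E ++ T)

theorem mk_stateWord (p : Fin (2 * k + 2)) (E : ℤ) (T : List (Letter k)) :
    mk (stateWord p E T) = gGen p * of (.inr (side p)) ^ E * mk T := by
  rw [stateWord, mk_cons, ← mul_mk, mk_zpowWord, mul_assoc]
  rfl

theorem Wfam_mul_mk (w : Widx k) (R : List (Letter k)) :
    Wfam s x w * mk R = mk (stateWord (src w) (exponent s x w) ((.inl (tgt w), false) :: R)) := by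
  rw [mk_stateWord, mk_cons, mk_singleton_false, Wfam_eq]
  simp only [gGen, mul_assoc]

theorem Wfam_mul_mk_stateWord (w : Widx k) (E : ℤ) (T : List (Letter k)) :
    Wfam s x w * mk (stateWord (tgt w) E T) =
      mk (stateWord (src w) (exponent s x w) (zpowWord (Sum.inr (side (tgt w))) E ++ T)) := by
  rw [mk_stateWord, mk_stateWord, Wfam_eq, ← mul_mk, mk_zpowWord]
  group

theorem mk_stateWord_zpowWord_append {p : Fin (2 * k + 2)} {c : Bool} (hc : side p = c)
    (e E : ℤ) (T : List (Letter k)) :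
    mk (stateWord p e (zpowWord (Sum.inr c) E ++ T)) = mk (stateWord p (e + E) T) := by
  rw [mk_stateWord, mk_stateWord, ← mul_mk, mk_zpowWord, hc, zpow_add]
  group

structure IsState (p : Fin (2 * k + 2)) (E : ℤ) (T : List (Letter k)) : Prop where
  isReduced : IsReduced T
  head_ne : ∀ u ∈ T.head?, u.1 ≠ .inr (side p)
  -- `p < q` rather than `p ≠ q`: merging an edge into `g_p` moves `p` back along its half
  head_of_eq_zero : E = 0 → ∀ u ∈ T.head?, ∃ q, p < q ∧ u = (.inl q, false)
  isSumFrom : IsSumFrom s x p E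

def weight (E : ℤ) (T : List (Letter k)) : ℕ := T.length + if E = 0 then 0 else 1

theorem length_le_weight (E : ℤ) (T : List (Letter k)) : T.length ≤ weight E T :=
  Nat.le_add_right _ _

theorem weight_le_length (c : Bool) (E : ℤ) (T : List (Letter k)) :
    weight E T ≤ (zpowWord (Sum.inr c) E ++ T).length := by
  simp only [weight, zpowWord, List.length_append, List.length_replicate]
  split_ifs <;> omega

def HasNormalForm (w : Widx k) (l : List (Widx k)) : Prop :=
  ∃ E T, IsState s x (src w) E T ∧ ((w :: l).map (Wfam s x)).prod = mk (stateWord (src w) E T) ∧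
    (w :: l).length + src w ≤ (2 * k + 2) * weight E T

variable {s x}

theorem IsSumFrom.exponent_add (hno : ∀ U : Finset (Fin k), ∑ i ∈ U, s i ≠ x) {w : Widx k}
    {E : ℤ} (hE : IsSumFrom s x (tgt w) E) (hsucc : (tgt w : ℕ) = src w + 1)
    (hside : side (tgt w) = side (src w)) {U : Finset (Fin k)}
    (hU : ∀ i ∈ U, edgePos (side (src w)) i = src w) (he : exponent s x w = ∑ i ∈ U, (s i : ℤ)) :
    IsSumFrom s x (src w) (exponent s x w + E) ∧ (exponent s x w + E = 0 → E = 0) := by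
  obtain ⟨V, ε, hV, rfl⟩ := hE
  rw [hside] at hV
  have hdisj : Disjoint U V := Finset.disjoint_left.2 fun i hiU hiV ↦ by
    have := hU i hiU; have := hV i hiV; omega
  have hsum : exponent s x w + (∑ i ∈ V, (s i : ℤ) - if ε then (x : ℤ) else 0) =
      ∑ i ∈ U ∪ V, (s i : ℤ) - if ε then (x : ℤ) else 0 := by
    rw [Finset.sum_union hdisj, he]; ring
  refine ⟨⟨U ∪ V, ε, fun i hi ↦ ?_, hsum⟩, ?_⟩
  · rcases Finset.mem_union.1 hi with hi | hi
    · exact (hU i hi).ge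
    · have := hV i hi; omega
  · rw [hsum]
    cases ε
    · have hVle : ∑ i ∈ V, (s i : ℤ) ≤ ∑ i ∈ U ∪ V, (s i : ℤ) :=
        Finset.sum_le_sum_of_subset_of_nonneg Finset.subset_union_right (by simp)
      have hV0 : 0 ≤ ∑ i ∈ V, (s i : ℤ) := Finset.sum_nonneg (by simp)
      simp only [Bool.false_eq_true, if_false, sub_zero]
      omega
    · intro h
      exact absurd (by exact_mod_cast sub_eq_zero.1 h) (hno (U ∪ V))

theorem IsState.mem_head? {p : Fin (2 * k + 2)} {E : ℤ} {T : List (Letter k)}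
    (h : IsState s x p E T) {u : Letter k} (hu : u ∈ (zpowWord (Sum.inr (side p)) E ++ T).head?) :
    u.1 = Sum.inr (side p) ∨ ∃ q, p < q ∧ u = (Sum.inl q, false) := by
  rcases mem_head?_zpowWord_append hu with hu | ⟨hE, hu⟩
  · exact .inl hu
  · exact .inr (h.head_of_eq_zero hE u hu)

theorem IsState.isReduced_stateWord {p : Fin (2 * k + 2)} {E : ℤ} {T : List (Letter k)}
    (h : IsState s x p E T) : IsReduced (stateWord p E T) := by
  rw [stateWord, isReduced_cons, isReduced_append]
  refine ⟨fun u hu hpu ↦ ?_, isReduced_zpowWord _ _, h.isReduced, fun a ha b hb hab ↦ ?_⟩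
  · rcases h.mem_head? hu with hu | ⟨q, hpq, rfl⟩
    · simp [hu] at hpu
    · simp only [Sum.inl.injEq] at hpu
      exact absurd hpu hpq.ne
  · exact absurd (hab.symm.trans (fst_of_mem_zpowWord (List.mem_of_mem_getLast? ha)))
      (h.head_ne b hb)

theorem isState_cons (hx : x ≠ 0) (w : Widx k) {R : List (Letter k)}
    (hR : IsReduced ((.inl (tgt w), false) :: R)) :
    IsState s x (src w) (exponent s x w) ((.inl (tgt w), false) :: R) where
  isReduced := hR
  head_ne := by simp
  head_of_eq_zero he := by
    simp only [List.head?_cons, Option.mem_some_iff, forall_eq', Prod.mk.injEq, Sum.inl.injEq,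
      and_true, exists_eq_right']
    rcases forward_or_crossing s x w with ⟨hsucc, -⟩ | ⟨he', -⟩
    · rw [Fin.lt_def]; omega
    · omega
  isSumFrom := isSumFrom_exponent s x w

theorem IsState.cross (hx : x ≠ 0) {w : Widx k} {E : ℤ} {T : List (Letter k)}
    (h : IsState s x (tgt w) E T) (he : exponent s x w = -x)
    (hside : side (tgt w) ≠ side (src w)) :
    IsState s x (src w) (exponent s x w) (zpowWord (Sum.inr (side (tgt w))) E ++ T) where
  isReduced := h.isReduced_stateWord.infix ⟨[(.inl (tgt w), true)], [], by simp [stateWord]⟩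
  head_ne u hu := by
    rcases h.mem_head? hu with hu' | ⟨q, -, rfl⟩
    · simpa [hu'] using hside
    · simp
  head_of_eq_zero he0 := by omega
  isSumFrom := isSumFrom_exponent s x w

theorem IsState.merge (hno : ∀ U : Finset (Fin k), ∑ i ∈ U, s i ≠ x) {w : Widx k} {E : ℤ}
    {T : List (Letter k)} (h : IsState s x (tgt w) E T) (hsucc : (tgt w : ℕ) = src w + 1)
    (hside : side (tgt w) = side (src w)) {U : Finset (Fin k)}
    (hU : ∀ i ∈ U, edgePos (side (src w)) i = src w) (he : exponent s x w = ∑ i ∈ U, (s i : ℤ)) :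
    IsState s x (src w) (exponent s x w + E) T where
  isReduced := h.isReduced
  head_ne := hside ▸ h.head_ne
  head_of_eq_zero he0 u hu := by
    obtain ⟨q, hq, rfl⟩ :=
      h.head_of_eq_zero ((h.isSumFrom.exponent_add hno hsucc hside hU he).2 he0) u hu
    exact ⟨q, by rw [Fin.lt_def] at hq ⊢; omega, rfl⟩
  isSumFrom := (h.isSumFrom.exponent_add hno hsucc hside hU he).1

theorem hasNormalForm_nil (hx : x ≠ 0) (w : Widx k) : HasNormalForm s x w [] := by
  refine ⟨_, _, isState_cons hx w IsReduced.singleton,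
    by simpa [← one_eq_mk] using Wfam_mul_mk s x w [], ?_⟩
  have := length_le_weight (exponent s x w) [(Sum.inl (tgt w), false)]
  have := (src w).isLt
  simp only [List.length_singleton] at *
  nlinarith

theorem HasNormalForm.cons (hno : ∀ U : Finset (Fin k), ∑ i ∈ U, s i ≠ x) {w' : Widx k}
    {l : List (Widx k)} (h : HasNormalForm s x w' l) (w : Widx k) :
    HasNormalForm s x w (w' :: l) := by
  have hx : x ≠ 0 := fun h ↦ hno ∅ (by simp [h])
  obtain ⟨E, T, h, hprod, hlen⟩ := h
  have := (src w).isLt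
  rw [HasNormalForm, List.map_cons, List.prod_cons, hprod, List.length_cons]
  by_cases hc : tgt w = src w'
  · rw [← hc] at h hlen ⊢
    rw [Wfam_mul_mk_stateWord]
    rcases forward_or_crossing s x w with ⟨hsucc, hside, U, hU, he⟩ | ⟨he, hside⟩
    · refine ⟨_, T, h.merge hno hsucc hside hU he,
        mk_stateWord_zpowWord_append hside.symm _ _ _, ?_⟩
      have : weight E T ≤ weight (exponent s x w + E) T := by
        have := (h.isSumFrom.exponent_add hno hsucc hside hU he).2
        simp only [weight]; split_ifs <;> simp_all
      nlinarith
    · refine ⟨_, _, h.cross hx he hside, rfl, ?_⟩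
      have := weight_le_length (side (tgt w)) E T
      have : weight (exponent s x w) (zpowWord (Sum.inr (side (tgt w))) E ++ T) =
          (zpowWord (Sum.inr (side (tgt w))) E ++ T).length + 1 := by
        simp [weight, he, hx]
      nlinarith
  · have hR : IsReduced ((Sum.inl (tgt w), false) :: stateWord (src w') E T) := by
      rw [isReduced_cons]
      exact ⟨by simp [stateWord, hc], h.isReduced_stateWord⟩
    refine ⟨_, _, isState_cons hx w hR, Wfam_mul_mk s x w _, ?_⟩
    have := weight_le_length (side (src w')) E T
    have := length_le_weight (exponent s x w) ((Sum.inl (tgt w), false) :: stateWord (src w') E T)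
    simp only [stateWord, List.length_cons] at *
    nlinarith

theorem hasNormalForm (hno : ∀ U : Finset (Fin k), ∑ i ∈ U, s i ≠ x) (w : Widx k)
    (l : List (Widx k)) : HasNormalForm s x w l := by
  induction l generalizing w with
  | nil => exact hasNormalForm_nil (fun h ↦ hno ∅ (by simp [h])) w
  | cons w' l ih => exact (ih w').cons hno w

theorem length_le_norm_prod (hno : ∀ U : Finset (Fin k), ∑ i ∈ U, s i ≠ x) {l : List (Widx k)}
    (hl : l ≠ []) : l.length ≤ (2 * k + 2) * norm (l.map (Wfam s x)).prod := by
  obtain ⟨w, l, rfl⟩ := List.exists_cons_of_ne_nil hl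
  obtain ⟨E, T, h, hprod, hlen⟩ := hasNormalForm hno w l
  have := weight_le_length (side (src w)) E T
  rw [hprod, h.isReduced_stateWord.norm_mk]
  simp only [stateWord, List.length_cons] at hlen ⊢
  nlinarith

theorem finite_factorizations (hno : ∀ U : Finset (Fin k), ∑ i ∈ U, s i ≠ x) (m : Fgrp k) :
    {l : List (Widx k) | l ≠ [] ∧ (l.map (Wfam s x)).prod = m}.Finite :=
  (List.finite_length_le _ ((2 * k + 2) * norm m)).subset fun _ ⟨hl, hm⟩ ↦
    hm ▸ length_le_norm_prod hno hl

def subsetCycle (U : Finset (Fin k)) : List (Widx k) :=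
  List.ofFn (fun i ↦ if i ∈ U then .inl i else .inr (.inl i)) ++
    .inr (.inr (.inr (.inr false))) ::
    List.ofFn (fun i ↦ if i ∈ U then .inr (.inr (.inl i)) else .inr (.inr (.inr (.inl i)))) ++
    [.inr (.inr (.inr (.inr true)))]

theorem prod_subsetCycle {U : Finset (Fin k)} (hU : ∑ i ∈ U, s i = x) :
    ((subsetCycle U).map (Wfam s x)).prod = 1 := by
  let gA : Fin (k + 1) → Fgrp k := fun j ↦ gGen ⟨j, by omega⟩
  let gB : Fin (k + 1) → Fgrp k := fun j ↦ gGen ⟨k + j + 1, by omega⟩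
  have hA : (Wfam s x ∘ fun i ↦ if i ∈ U then .inl i else .inr (.inl i)) =
      fun i ↦ gA i.castSucc * aGen ^ (if i ∈ U then s i else 0) * (gA i.succ)⁻¹ := by
    ext i; split_ifs with hi <;> simp [Wfam, gA, hi]
  have hB : (Wfam s x ∘ fun i ↦
        if i ∈ U then .inr (.inr (.inl i)) else .inr (.inr (.inr (.inl i)))) =
      fun i ↦ gB i.castSucc * bGen ^ (if i ∈ U then s i else 0) * (gB i.succ)⁻¹ := by
    ext i; split_ifs with hi <;> simp [Wfam, gB, hi, add_assoc]
  have hsum : ∑ i, (if i ∈ U then s i else 0) = x := by simpa using hU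
  simp only [subsetCycle, List.map_append, List.map_cons, List.map_nil, List.map_ofFn,
    List.prod_append, List.prod_cons, List.prod_nil, hA, hB, List.prod_ofFn_mul_pow_mul_inv, hsum]
  simp [Wfam, gA, gB, two_mul]
  group

end SubsetSumCycle

theorem exists_infinitely_factorizable_iff_subset_sum_general (k : ℕ)
    (s : Fin k → ℕ) (x : ℕ) :
    (∃ m : Fgrp k,
        { l : List (Widx k) | l ≠ [] ∧ (l.map (Wfam s x)).prod = m }.Infinite) ↔
      (∃ U : Finset (Fin k), ∑ i ∈ U, s i = x) := by
  refine ⟨fun ⟨m, hm⟩ ↦ ?_, fun ⟨U, hU⟩ ↦ ⟨1, ?_⟩⟩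
  · by_contra hno
    exact hm (SubsetSumCycle.finite_factorizations (fun U hU ↦ hno ⟨U, hU⟩) m)
  · exact List.infinite_setOf_prod_map_eq_one (by simp [SubsetSumCycle.subsetCycle])
      (SubsetSumCycle.prod_subsetCycle hU)

/-- There exists an element of the subsemigroup of `F` generated by the family `W`
having infinitely many distinct factorizations over `W` iff the subset sum instance
`(s₁,…,s_k; x)` has a solution. -/
theorem exists_infinitely_factorizable_iff_subset_sum (k : ℕ) (hk : 1 ≤ k)
    (s : Fin k → ℕ) (hs : ∀ i, 0 < s i) (x : ℕ) (hx : 0 < x) :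
    (∃ m : Fgrp k,
        { l : List (Widx k) | l ≠ [] ∧ (l.map (Wfam s x)).prod = m }.Infinite) ↔
      (∃ U : Finset (Fin k), ∑ i ∈ U, s i = x) :=
  exists_infinitely_factorizable_iff_subset_sum_general k s x
end
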